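/- There exists a constant C > 0 such that for every real y ≥ 1, the tail sum ∑_{m > y} 1/(m·φ(m)) over positive integers m is at most C/y. -/

import Mathlib

open Finset
open scoped ENNReal Nat Real

/-!
Since `φ d * φ (m / d) ≤ φ m` and `∑_{d ∣ m} φ (m / d) = m`, we get `m / φ m ≤ ∑_{d ∣ m} 1 / φ d`.
Writing `m = d * k`, the tail is therefore at most
`∑_d 1 / (φ d * d²) * ∑_{k > y / d} 1 / k² ≤ ∑_d 1 / (φ d * d²) * 4 d / (y + d)`,
which is at most `(4 / y) * ∑_d 1 / (d * φ d)`.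
The last series converges by the same estimate at `y = 0`, which bounds it by `4 ζ(2)`.
-/

namespace Nat

theorem div_totient_le_sum_inv_totient (m : ℕ) :
    (m : ℝ) / φ m ≤ ∑ d ∈ m.divisors, (φ d : ℝ)⁻¹ := by
  rcases eq_or_ne m 0 with rfl | hm
  · simp
  have hφm : (0 : ℝ) < φ m := by exact_mod_cast totient_pos.mpr (pos_of_ne_zero hm)
  have hφ_div : ∀ d ∈ m.divisors, (φ (m / d) : ℝ) ≤ (φ d : ℝ)⁻¹ * φ m := by
    intro d hd
    have hφd : (0 : ℝ) < φ d := by exact_mod_cast totient_pos.mpr (pos_of_mem_divisors hd)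
    rw [inv_mul_eq_div, le_div_iff₀ hφd]
    have := totient_super_multiplicative (m / d) d
    rw [Nat.div_mul_cancel (dvd_of_mem_divisors hd)] at this
    exact_mod_cast this
  rw [div_le_iff₀ hφm, sum_mul]
  calc (m : ℝ) = ∑ d ∈ m.divisors, (φ (m / d) : ℝ) := by
        rw [sum_div_divisors m fun d ↦ (φ d : ℝ)]
        exact_mod_cast (sum_totient m).symm
    _ ≤ _ := sum_le_sum hφ_div

theorem inv_mul_totient_le_sum_divisorsAntidiagonal {m : ℕ} (hm : m ≠ 0) :
    ((m : ℝ) * φ m)⁻¹ ≤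
      ∑ p ∈ m.divisorsAntidiagonal, ((φ p.1 : ℝ) * p.1 ^ 2)⁻¹ * ((p.2 : ℝ) ^ 2)⁻¹ := by
  calc ((m : ℝ) * φ m)⁻¹ = m / φ m * ((m : ℝ) ^ 2)⁻¹ := by
        field_simp
    _ ≤ (∑ d ∈ m.divisors, (φ d : ℝ)⁻¹) * ((m : ℝ) ^ 2)⁻¹ := by
        gcongr
        exact div_totient_le_sum_inv_totient m
    _ = _ := by
        rw [sum_mul, ← sum_divisorsAntidiagonal fun d _ ↦ (φ d : ℝ)⁻¹ * ((m : ℝ) ^ 2)⁻¹]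
        refine sum_congr rfl fun p hp ↦ ?_
        obtain ⟨rfl, -⟩ := mem_divisorsAntidiagonal.mp hp
        push_cast
        ring

end Nat

theorem tsum_le_tsum_prod_of_le_sum_divisorsAntidiagonal {f : ℕ → ℝ≥0∞} {F : ℕ × ℕ → ℝ≥0∞}
    (h : ∀ m, f m ≤ ∑ p ∈ m.divisorsAntidiagonal, F p) : ∑' m, f m ≤ ∑' p, F p := by
  rw [← ENNReal.tsum_fiberwise F fun p ↦ p.1 * p.2]
  refine ENNReal.tsum_le_tsum fun m ↦ (h m).trans ?_
  rw [← Finset.tsum_subtype]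
  exact ENNReal.tsum_mono_subtype F fun p hp ↦ (Nat.mem_divisorsAntidiagonal.mp hp).1

theorem tsum_indicator_Ioi_inv_sq_le (n : ℕ) :
    ∑' k : ℕ, (Set.Ioi n).indicator (fun k : ℕ ↦ ENNReal.ofReal ((k : ℝ) ^ 2)⁻¹) k ≤
      ENNReal.ofReal (2 / (n + 1)) := by
  refine ENNReal.tsum_le_of_sum_range_le fun N ↦ ?_
  have hIoo : (range N).filter (· ∈ Set.Ioi n) = Ioo n N := by
    ext k
    simp only [mem_filter, mem_range, Set.mem_Ioi, mem_Ioo]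
    omega
  rw [sum_indicator_eq_sum_filter, hIoo, ← ENNReal.ofReal_sum_of_nonneg fun k _ ↦ by positivity]
  exact ENNReal.ofReal_le_ofReal (sum_Ioo_inv_sq_le n N)

theorem tsum_indicator_inv_sq_le {y : ℝ} (hy : 0 ≤ y) (d : ℕ) :
    ∑' k : ℕ, {k : ℕ | y < (d * k : ℕ)}.indicator (fun k : ℕ ↦ ENNReal.ofReal ((k : ℝ) ^ 2)⁻¹) k ≤
      ENNReal.ofReal (4 * d / (y + d)) := by
  rcases eq_or_ne d 0 with rfl | hd
  · simp [hy.not_gt]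
  have hd' : (0 : ℝ) < d := by positivity
  set n := ⌊y / d⌋₊
  have hset : {k : ℕ | y < (d * k : ℕ)} = Set.Ioi n := by
    ext k
    rw [Set.mem_ofPred_eq, Set.mem_Ioi, Nat.floor_lt (by positivity), div_lt_iff₀ hd']
    push_cast
    rw [mul_comm]
  have hn : y / d < n + 1 := Nat.lt_floor_add_one _
  rw [hset]
  refine (tsum_indicator_Ioi_inv_sq_le n).trans (ENNReal.ofReal_le_ofReal ?_)
  rw [div_le_div_iff₀ (by positivity) (by positivity)]
  rw [div_lt_iff₀ hd'] at hn
  nlinarith [(Nat.cast_nonneg n : (0:ℝ) ≤ n)]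

theorem tsum_indicator_inv_mul_totient_le {y : ℝ} (hy : 0 ≤ y) :
    ∑' m : ℕ, {m : ℕ | y < m}.indicator (fun m : ℕ ↦ ENNReal.ofReal ((m : ℝ) * φ m)⁻¹) m ≤
      ∑' d : ℕ, ENNReal.ofReal (((φ d : ℝ) * d ^ 2)⁻¹ * (4 * d / (y + d))) := by
  set F : ℕ × ℕ → ℝ≥0∞ := {p : ℕ × ℕ | y < (p.1 * p.2 : ℕ)}.indicator
    fun p ↦ ENNReal.ofReal (((φ p.1 : ℝ) * p.1 ^ 2)⁻¹ * ((p.2 : ℝ) ^ 2)⁻¹)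
  calc _ ≤ ∑' p, F p := tsum_le_tsum_prod_of_le_sum_divisorsAntidiagonal fun m ↦ ?_
    _ = ∑' d, ∑' k, F (d, k) := ENNReal.tsum_prod'
    _ ≤ _ := ENNReal.tsum_le_tsum fun d ↦ ?_
  · by_cases hm : y < m
    · have hm0 : m ≠ 0 := (Nat.cast_pos.mp (hy.trans_lt hm)).ne'
      have hF : ∀ p ∈ m.divisorsAntidiagonal,
          F p = ENNReal.ofReal (((φ p.1 : ℝ) * p.1 ^ 2)⁻¹ * ((p.2 : ℝ) ^ 2)⁻¹) := by
        intro p hp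
        refine Set.indicator_of_mem ?_ _
        rwa [Set.mem_ofPred_eq, (Nat.mem_divisorsAntidiagonal.mp hp).1]
      rw [Set.indicator_of_mem (show m ∈ {m : ℕ | y < m} from hm), sum_congr rfl hF,
        ← ENNReal.ofReal_sum_of_nonneg fun p _ ↦ by positivity]
      exact ENNReal.ofReal_le_ofReal (Nat.inv_mul_totient_le_sum_divisorsAntidiagonal hm0)
    · rw [Set.indicator_of_notMem (show m ∉ {m : ℕ | y < m} from hm)]
      exact zero_le
  · have hF : ∀ k, F (d, k) = ENNReal.ofReal ((φ d : ℝ) * d ^ 2)⁻¹ *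
        {k : ℕ | y < (d * k : ℕ)}.indicator (fun k : ℕ ↦ ENNReal.ofReal ((k : ℝ) ^ 2)⁻¹) k := by
      intro k
      simp only [F, Set.indicator_apply, Set.mem_ofPred_eq]
      split_ifs
      · exact ENNReal.ofReal_mul (by positivity)
      · rw [mul_zero]
    rw [tsum_congr hF, ENNReal.tsum_mul_left, ENNReal.ofReal_mul (by positivity)]
    gcongr
    exact tsum_indicator_inv_sq_le hy d

theorem tsum_inv_mul_totient_le :
    ∑' m : ℕ, ENNReal.ofReal ((m : ℝ) * φ m)⁻¹ ≤ ENNReal.ofReal (2 * π ^ 2 / 3) := by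
  have hindicator : ∀ m : ℕ, ENNReal.ofReal ((m : ℝ) * φ m)⁻¹ =
      {m : ℕ | (0 : ℝ) < m}.indicator (fun m : ℕ ↦ ENNReal.ofReal ((m : ℝ) * φ m)⁻¹) m := by
    intro m
    rcases eq_or_ne m 0 with rfl | hm
    · simp
    · rw [Set.indicator_of_mem (by simpa [Nat.pos_iff_ne_zero] using hm)]
  have hzeta : HasSum (fun d : ℕ ↦ 4 * (1 / (d : ℝ) ^ 2)) (2 * π ^ 2 / 3) := by
    have := hasSum_zeta_two.mul_left 4
    rwa [show 4 * (π ^ 2 / 6) = 2 * π ^ 2 / 3 by ring] at this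
  calc _ = _ := tsum_congr hindicator
    _ ≤ _ := tsum_indicator_inv_mul_totient_le le_rfl
    _ ≤ ∑' d : ℕ, ENNReal.ofReal (4 * (1 / (d : ℝ) ^ 2)) := by
        refine ENNReal.tsum_le_tsum fun d ↦ ENNReal.ofReal_le_ofReal ?_
        rcases eq_or_ne d 0 with rfl | hd
        · simp
        have hφ : (1 : ℝ) ≤ φ d := by exact_mod_cast Nat.totient_pos.mpr (Nat.pos_of_ne_zero hd)
        have hd' : (0 : ℝ) < d := by positivity
        field_simp
        rw [zero_add]
        exact le_mul_of_one_le_left hd'.le hφ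
    _ = _ := by
        rw [← ENNReal.ofReal_tsum_of_nonneg (fun d ↦ by positivity) hzeta.summable, hzeta.tsum_eq]

theorem tsum_subtype_inv_mul_totient_le {y : ℝ} (hy : 0 < y) :
    ∑' m : {m : ℕ // y < m}, ENNReal.ofReal ((m : ℝ) * φ m)⁻¹ ≤
      ENNReal.ofReal (4 / y) * ∑' m : ℕ, ENNReal.ofReal ((m : ℝ) * φ m)⁻¹ := by
  rw [← ENNReal.tsum_mul_left]
  calc _ = _ := tsum_subtype {m : ℕ | y < m} fun m : ℕ ↦ ENNReal.ofReal ((m : ℝ) * φ m)⁻¹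
    _ ≤ _ := tsum_indicator_inv_mul_totient_le hy.le
    _ ≤ _ := by
        refine ENNReal.tsum_le_tsum fun d ↦ ?_
        rw [← ENNReal.ofReal_mul (by positivity)]
        refine ENNReal.ofReal_le_ofReal ?_
        rcases eq_or_ne d 0 with rfl | hd
        · simp
        have hd' : (0 : ℝ) < d := by positivity
        have hφ : (0 : ℝ) < φ d := by exact_mod_cast Nat.totient_pos.mpr (Nat.pos_of_ne_zero hd)
        field_simp
        linarith

theorem tsum_le_of_tsum_ofReal_le {ι : Type*} {f : ι → ℝ} {c : ℝ} (hf : ∀ i, 0 ≤ f i)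
    (hc : 0 ≤ c) (h : ∑' i, ENNReal.ofReal (f i) ≤ ENNReal.ofReal c) : ∑' i, f i ≤ c := by
  have := ENNReal.toReal_le_of_le_ofReal hc h
  rwa [ENNReal.tsum_toReal_eq fun _ ↦ ENNReal.ofReal_ne_top,
    tsum_congr fun i ↦ ENNReal.toReal_ofReal (hf i)] at this

/-- There is a constant `C > 0` such that for every real `y ≥ 1`,
`∑_{m > y} 1/(m·φ(m)) ≤ C/y`. -/
theorem tail_sum_one_div_mul_totient_le :
    ∃ C : ℝ, 0 < C ∧ ∀ y : ℝ, 1 ≤ y →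
      (∑' m : {m : ℕ // y < (m : ℝ)}, 1 / ((m.1 : ℝ) * (Nat.totient m.1 : ℝ))) ≤ C / y := by
  refine ⟨8 * π ^ 2 / 3, by positivity, fun y hy ↦ ?_⟩
  have hy0 : 0 < y := one_pos.trans_le hy
  simp only [one_div]
  refine tsum_le_of_tsum_ofReal_le (fun m ↦ by positivity) (by positivity) ?_
  calc _ ≤ _ := tsum_subtype_inv_mul_totient_le hy0
    _ ≤ ENNReal.ofReal (4 / y) * ENNReal.ofReal (2 * π ^ 2 / 3) := by
        gcongr
        exact tsum_inv_mul_totient_le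
    _ = ENNReal.ofReal (8 * π ^ 2 / 3 / y) := by
        rw [← ENNReal.ofReal_mul (by positivity)]
        congr 1
        ring
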